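/- arXiv:1910.04394 — 2 statements merged into one kernel-verified Lean document; each statement's English description precedes it below -/
import Mathlib

section
/- With the categorical setup (θ_i = p(Z=i), φ_j = Σ_i p(Y=j|Z=i)θ_i > 0), the reciprocal of the i-th diagonal Fisher information entry satisfies 1/[I_Y(θ)]_{i,i} = θ_i / (Σ_j p(Y=j|Z=i) p(Z=i|Y=j)) ≥ θ_i, where p(Z=i|Y=j) = p(Y=j|Z=i)θ_i/φ_j. -/
/-- With `θ i = p(Z=i)`, `φ j = ∑ i, T j i * θ i > 0` and `[I_Y(θ)]_{i,i} = ∑ j, T j i ^ 2 / φ j`,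
the reciprocal of the `i`-th diagonal Fisher information entry satisfies
`1/[I_Y(θ)]_{i,i} = θ i / (∑ j p(Y=j|Z=i) p(Z=i|Y=j)) ≥ θ i`, where
`p(Z=i|Y=j) = T j i * θ i / φ j`. -/
theorem recip_diag_indirect_fisher
    (KZ KY : ℕ) (θ : Fin KZ → ℝ) (T : Fin KY → Fin KZ → ℝ) (φ : Fin KY → ℝ)
    (hθpos : ∀ i, 0 < θ i) (hθsum : ∑ i, θ i = 1)
    (hTnn : ∀ j i, 0 ≤ T j i) (hTstoch : ∀ i, ∑ j, T j i = 1)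
    (hφ : ∀ j, φ j = ∑ i, T j i * θ i) (hφpos : ∀ j, 0 < φ j)
    (i : Fin KZ) :
    1 / (∑ j, T j i ^ 2 / φ j)
        = θ i / (∑ j, T j i * (T j i * θ i / φ j)) ∧
    θ i / (∑ j, T j i * (T j i * θ i / φ j)) ≥ θ i := by
  have hθi := hθpos i
  have hsum_eq : (∑ j, T j i * (T j i * θ i / φ j)) = θ i * ∑ j, T j i ^ 2 / φ j := by
    rw [Finset.mul_sum]
    refine Finset.sum_congr rfl fun j _ => ?_
    field_simp
  -- S > 0
  have hex : ∃ j, 0 < T j i := by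
    by_contra h
    push_neg at h
    have : (∑ j, T j i) = 0 := Finset.sum_eq_zero fun j _ => le_antisymm (h j) (hTnn j i)
    rw [hTstoch i] at this; norm_num at this
  obtain ⟨j0, hj0⟩ := hex
  have hSpos : 0 < ∑ j, T j i ^ 2 / φ j := by
    apply Finset.sum_pos' (fun j _ => div_nonneg (sq_nonneg _) (hφpos j).le)
    exact ⟨j0, Finset.mem_univ _, div_pos (pow_pos hj0 2) (hφpos j0)⟩
  have hθS : θ i * (∑ j, T j i ^ 2 / φ j) ≤ 1 := by
    calc θ i * (∑ j, T j i ^ 2 / φ j) = ∑ j, T j i * (T j i * θ i / φ j) := hsum_eq.symm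
      _ ≤ ∑ j, T j i * 1 := by
          refine Finset.sum_le_sum fun j _ => ?_
          apply mul_le_mul_of_nonneg_left _ (hTnn j i)
          rw [div_le_one (hφpos j)]
          calc T j i * θ i ≤ ∑ k, T j k * θ k :=
                Finset.single_le_sum (f := fun k => T j k * θ k)
                  (fun k _ => mul_nonneg (hTnn j k) (hθpos k).le) (Finset.mem_univ i)
            _ = φ j := (hφ j).symm
      _ = 1 := by simp [hTstoch i]
  constructor
  · rw [hsum_eq, ← div_div, div_self hθi.ne']
  · rw [hsum_eq, ← div_div, div_self hθi.ne', ge_iff_le, le_div_iff₀ hSpos]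
    linarith [hθS]
end

section
/- In the categorical setting, combining [I_Y(θ)⁻¹]_{i,i} ≥ 1/[I_Y(θ)]_{i,i} (positive definite matrix diagonal inequality) with 1/[I_Y(θ)]_{i,i} ≥ θ_i yields [I_Y(θ)⁻¹]_{i,i} ≥ [I_Z(θ)⁻¹]_{i,i} = θ_i for all i. -/
/-!
Cauchy–Schwarz for the form `x ⬝ᵥ A *ᵥ y` applied to `eᵢ` and `A⁻¹ eᵢ` gives
`1 ≤ Aᵢᵢ (A⁻¹)ᵢᵢ`. For `A = I_Y(θ)`, each summand of `[I_Y(θ)]ᵢᵢ = ∑ⱼ Tⱼᵢ² / φⱼ` is at most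
`Tⱼᵢ / θᵢ` because `Tⱼᵢ θᵢ ≤ φⱼ`, and the column sums of `T` are `1`; hence
`θᵢ ≤ 1 / [I_Y(θ)]ᵢᵢ ≤ [I_Y(θ)⁻¹]ᵢᵢ`.
-/

open Finset Matrix

namespace Matrix

variable {n : Type*} [Fintype n] [DecidableEq n]

theorem PosSemidef.dotProduct_mulVec_sq_le {A : Matrix n n ℝ} (hA : A.PosSemidef) (x y : n → ℝ) :
    (x ⬝ᵥ A *ᵥ y) ^ 2 ≤ (x ⬝ᵥ A *ᵥ x) * (y ⬝ᵥ A *ᵥ y) := by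
  have hsymm : A.IsSymm := (conjTranspose_eq_transpose_of_trivial A).symm.trans hA.isHermitian
  simpa only [toBilin'_apply'] using
    (toBilin' A).apply_sq_le_of_symm
      (fun x => by simpa only [toBilin'_apply', star_trivial] using hA.dotProduct_mulVec_nonneg x)
      (LinearMap.BilinForm.isSymm_iff.mp (isSymm_toBilin'_iff_isSymm.mpr hsymm)) x y

theorem PosDef.one_le_diag_mul_inv_diag {A : Matrix n n ℝ} (hA : A.PosDef) (i : n) :
    1 ≤ A i i * A⁻¹ i i := by
  have hAA : A * A⁻¹ = 1 := A.mul_nonsing_inv ((isUnit_iff_isUnit_det A).mp hA.isUnit)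
  have key := hA.posSemidef.dotProduct_mulVec_sq_le (Pi.single i 1) (A⁻¹ *ᵥ Pi.single i 1)
  simp only [mulVec_mulVec, hAA, one_mulVec] at key
  simpa using key

theorem PosDef.one_div_diag_le_inv_diag {A : Matrix n n ℝ} (hA : A.PosDef) (i : n) :
    1 / A i i ≤ A⁻¹ i i := by
  rw [div_le_iff₀' hA.diag_pos]
  exact hA.one_le_diag_mul_inv_diag i

theorem inv_diagonal_one_div {K : Type*} [Field K] {v : n → K} (hv : ∀ i, v i ≠ 0) :
    (diagonal fun i => 1 / v i)⁻¹ = diagonal v := by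
  refine inv_eq_right_inv ?_
  rw [diagonal_mul_diagonal, ← diagonal_one]
  congr with i
  exact one_div_mul_cancel (hv i)

end Matrix

theorem mul_self_div_le_div_of_mul_le {a b c : ℝ} (ha : 0 ≤ a) (hb : 0 < b) (h : a * b ≤ c) :
    a * a / c ≤ a / b := by
  rcases ha.eq_or_lt with rfl | ha
  · simp
  calc a * a / c ≤ a * a / (a * b) := by gcongr
    _ = a / b := by field_simp

theorem Finset.sum_mul_self_div_le_sum_div {ι : Type*} (s : Finset ι) {a c : ι → ℝ} {b : ℝ}
    (ha : ∀ j, 0 ≤ a j) (hb : 0 < b) (h : ∀ j, a j * b ≤ c j) :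
    ∑ j ∈ s, a j * a j / c j ≤ (∑ j ∈ s, a j) / b := by
  rw [sum_div]
  exact sum_le_sum fun j _ => mul_self_div_le_div_of_mul_le (ha j) hb (h j)

theorem indirect_asymptotic_variance_ge_theta_general
    (KZ KY : ℕ) (θ : Fin KZ → ℝ) (T : Fin KY → Fin KZ → ℝ) (φ : Fin KY → ℝ)
    (hθpos : ∀ i, 0 < θ i)
    (hTnn : ∀ j i, 0 ≤ T j i) (hTstoch : ∀ i, ∑ j, T j i = 1)
    (hφ : ∀ j, φ j = ∑ i, T j i * θ i)
    (IY : Matrix (Fin KZ) (Fin KZ) ℝ)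
    (hIY : ∀ i₁ i₂, IY i₁ i₂ = ∑ j, T j i₁ * T j i₂ / φ j)
    (hpd : IY.PosDef) :
    ∀ i : Fin KZ,
      IY⁻¹ i i ≥ θ i ∧ (Matrix.diagonal (fun i => 1 / θ i))⁻¹ i i = θ i := by
  intro i
  have hTθ_le_φ (j : Fin KY) : T j i * θ i ≤ φ j := by
    rw [hφ j]
    exact single_le_sum (f := fun k => T j k * θ k)
      (fun k _ => mul_nonneg (hTnn j k) (hθpos k).le) (mem_univ i)
  have hIY_diag : IY i i ≤ 1 / θ i := by
    rw [hIY, ← hTstoch i]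
    exact sum_mul_self_div_le_sum_div univ (hTnn · i) (hθpos i) hTθ_le_φ
  refine ⟨?_, ?_⟩
  · calc θ i ≤ 1 / IY i i := (le_one_div (hθpos i) hpd.diag_pos).mpr hIY_diag
      _ ≤ IY⁻¹ i i := hpd.one_div_diag_le_inv_diag i
  · rw [inv_diagonal_one_div fun k => (hθpos k).ne', diagonal_apply_eq]

/-- In the categorical setting, if the indirect-observation Fisher information matrix
`[I_Y(θ)]_{i₁,i₂} = ∑ j, T j i₁ * T j i₂ / φ j` is positive definite, then
`[I_Y(θ)⁻¹]_{i,i} ≥ [I_Z(θ)⁻¹]_{i,i} = θ i` for all `i`,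
where `I_Z(θ) = diag(1/θ i)`. -/
theorem indirect_asymptotic_variance_ge_theta
    (KZ KY : ℕ) (θ : Fin KZ → ℝ) (T : Fin KY → Fin KZ → ℝ) (φ : Fin KY → ℝ)
    (hθpos : ∀ i, 0 < θ i) (hθsum : ∑ i, θ i = 1)
    (hTnn : ∀ j i, 0 ≤ T j i) (hTstoch : ∀ i, ∑ j, T j i = 1)
    (hφ : ∀ j, φ j = ∑ i, T j i * θ i) (hφpos : ∀ j, 0 < φ j)
    (IY : Matrix (Fin KZ) (Fin KZ) ℝ)
    (hIY : ∀ i₁ i₂, IY i₁ i₂ = ∑ j, T j i₁ * T j i₂ / φ j)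
    (hpd : IY.PosDef) :
    ∀ i : Fin KZ,
      IY⁻¹ i i ≥ θ i ∧ (Matrix.diagonal (fun i => 1 / θ i))⁻¹ i i = θ i :=
  indirect_asymptotic_variance_ge_theta_general KZ KY θ T φ hθpos hTnn hTstoch hφ IY hIY hpd
end
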